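/- Let C be a set of three domino tiles, none containing the value 0, whose six entries are pairwise distinct (hence they are exactly the values 1,2,3,4,5,6). Then any thirteen pairwise distinct domino tiles, none containing 0 and none belonging to C, have total pip sum at most 108. -/
import Mathlib


/-- A domino tile is an unordered pair of values in `{0,…,6}`. -/
abbrev Tile := Sym2 (Fin 7)

/-- The pip sum of the tile `[a,b]` is `a + b`. -/
def pips (t : Tile) : ℕ :=
  Sym2.lift ⟨fun (a b : Fin 7) => (a : ℕ) + (b : ℕ), fun a b => Nat.add_comm a b⟩ t

/-- All tiles not containing 0. -/
def Uset : Finset Tile := Finset.univ.filter (fun t => (0 : Fin 7) ∉ t)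

lemma Uset_card : Uset.card = 21 := by decide

lemma Uset_sum : ∑ t ∈ Uset, pips t = 147 := by decide

lemma Uset_slack : ∑ t ∈ Uset, (5 - pips t) = 7 := by decide

/-- The underlying finset of a tile. -/
def tset : Tile → Finset (Fin 7) :=
  Sym2.lift ⟨fun a b => {a, b}, fun a b => Finset.pair_comm a b⟩

lemma mem_tset {x : Fin 7} {t : Tile} : x ∈ tset t ↔ x ∈ t := by
  induction t using Sym2.ind with
  | _ a b => simp [tset, Sym2.mem_iff]

lemma tset_card {t : Tile} (h : ¬ t.IsDiag) : (tset t).card = 2 := by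
  induction t using Sym2.ind with
  | _ a b =>
    rw [Sym2.mk_isDiag_iff] at h
    simp [tset, Finset.card_pair h]

lemma tset_sum {t : Tile} (h : ¬ t.IsDiag) : ∑ x ∈ tset t, (x : ℕ) = pips t := by
  induction t using Sym2.ind with
  | _ a b =>
    rw [Sym2.mk_isDiag_iff] at h
    simp [tset, Finset.sum_pair h, pips]

/-- Let `C` be a set of three domino tiles, none containing the value 0, whose six
entries are pairwise distinct (no tile is a double and distinct tiles share no value;
hence the six entries are exactly 1,2,3,4,5,6).  Then any thirteen pairwise distinct
domino tiles, none containing 0 and none belonging to `C`, have total pip sum at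
most 108. -/
theorem thirteen_tiles_avoiding_connectors_pips_le_108 (C : Finset Tile)
    (hC3 : C.card = 3)
    (hC0 : ∀ t ∈ C, (0 : Fin 7) ∉ t)
    (hCdiag : ∀ t ∈ C, ¬ t.IsDiag)
    (hCdisj : ∀ t ∈ C, ∀ s ∈ C, t ≠ s → ∀ x : Fin 7, x ∈ t → x ∉ s)
    (T : Finset Tile) (hT : T.card = 13)
    (hT0 : ∀ t ∈ T, (0 : Fin 7) ∉ t)
    (hTC : ∀ t ∈ T, t ∉ C) :
    ∑ t ∈ T, pips t ≤ 108 := by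
  have hTU : T ⊆ Uset := fun t ht => Finset.mem_filter.2 ⟨Finset.mem_univ _, hT0 t ht⟩
  have hCU : C ⊆ Uset := fun t ht => Finset.mem_filter.2 ⟨Finset.mem_univ _, hC0 t ht⟩
  have hdisj : Disjoint T C := Finset.disjoint_left.2 fun a ha => hTC a ha
  have hTCU : T ∪ C ⊆ Uset := Finset.union_subset hTU hCU
  -- the complement E
  set E : Finset Tile := Uset \ (T ∪ C) with hE
  have hcardTC : (T ∪ C).card = 16 := by
    rw [Finset.card_union_of_disjoint hdisj, hT, hC3]
  have hcardE : E.card = 5 := by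
    rw [hE, Finset.card_sdiff_of_subset hTCU, Uset_card, hcardTC]
  -- sum over C is 21
  have hpd : (C : Set Tile).PairwiseDisjoint tset := by
    intro t ht s hs hts
    refine Finset.disjoint_left.2 fun x hx hx' => ?_
    exact hCdisj t ht s hs hts x (mem_tset.1 hx) (mem_tset.1 hx')
  have hbU : C.biUnion tset = Finset.univ.erase (0 : Fin 7) := by
    apply Finset.eq_of_subset_of_card_le
    · intro x hx
      obtain ⟨t, ht, hxt⟩ := Finset.mem_biUnion.1 hx
      refine Finset.mem_erase.2 ⟨?_, Finset.mem_univ _⟩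
      rintro rfl
      exact hC0 t ht (mem_tset.1 hxt)
    · rw [Finset.card_biUnion (fun t ht s hs hts => hpd ht hs hts)]
      have : ∑ t ∈ C, (tset t).card = ∑ t ∈ C, 2 :=
        Finset.sum_congr rfl fun t ht => tset_card (hCdiag t ht)
      rw [this, Finset.sum_const, hC3]
      decide
  have hsumC : ∑ t ∈ C, pips t = 21 := by
    have h1 : ∑ t ∈ C, ∑ x ∈ tset t, (x : ℕ) = ∑ x ∈ C.biUnion tset, (x : ℕ) :=
      (Finset.sum_biUnion hpd).symm
    have h2 : ∑ t ∈ C, ∑ x ∈ tset t, (x : ℕ) = ∑ t ∈ C, pips t :=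
      Finset.sum_congr rfl fun t ht => tset_sum (hCdiag t ht)
    rw [← h2, h1, hbU]
    decide
  -- sum over E is at least 18
  have hEU : E ⊆ Uset := Finset.sdiff_subset
  have hslack : ∑ t ∈ E, (5 - pips t) ≤ 7 := by
    rw [← Uset_slack]
    exact Finset.sum_le_sum_of_subset hEU
  have hsumE : 18 ≤ ∑ t ∈ E, pips t := by
    have h25 : 25 ≤ ∑ t ∈ E, (pips t + (5 - pips t)) := by
      have : ∑ t ∈ E, 5 ≤ ∑ t ∈ E, (pips t + (5 - pips t)) :=
        Finset.sum_le_sum fun t _ => by omega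
      rwa [Finset.sum_const, hcardE] at this
    rw [Finset.sum_add_distrib] at h25
    omega
  -- put things together
  have hsplit : ∑ t ∈ E, pips t + ∑ t ∈ T ∪ C, pips t = ∑ t ∈ Uset, pips t :=
    Finset.sum_sdiff hTCU
  rw [Finset.sum_union hdisj, Uset_sum, hsumC] at hsplit
  omega
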